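/- Let F be holomorphic on a domain containing the closed polydisc {|z_i| ≤ 2R} ⊆ ℂᵖ, let m ≥ 1, and suppose the Taylor expansion of F at 0 is F(z) = c + Σ_{i₁+⋯+i_p ≥ m} a_{i₁,…,i_p} z^{i₁}⋯z^{i_p} (i.e. all nonconstant terms of degree < m vanish). Then for 0 < ε < 1/2 and all z in the ball {|z| ≤ p^{-1} ε R}, |F(z) − c| ≤ 2 (2π)^{-p/2} R^{-p} ε^m (∫_{|z_i| ≤ 2R} |F|² dλ)^{1/2}. -/

import Mathlib

open MeasureTheory Real

/-!
On the polydisc of radius `√2 R` the monomials `z^I` are orthogonal, so pairing `F` with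
`conj z^I` isolates `a_I ‖z^I‖²`, and Cauchy–Schwarz gives the Cauchy-type coefficient bound
`|a_I| (2π)^{p/2} R^{p+|I|} ≤ ‖F‖_{L²}`. The radius `√2 R` makes this work uniformly in `I`:
`‖z^I‖² = ∏ π (√2 R)^{2Iᵢ+2} / (Iᵢ+1) ≥ (2π R²)^p R^{2|I|}` because `2^n ≥ n + 1`.
For `|z| ≤ εR/p` a term of degree `k ≥ m` is then at most `‖F‖_{L²} (2π)^{-p/2} R^{-p} (ε/p)^k`,
there are at most `p^k` multi-indices of degree `k`, and `∑_{k ≥ m} ε^k ≤ ε^m / (1 - ε) ≤ 2ε^m`.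
-/

open Set ComplexConjugate

section Disc

open Complex

lemma integral_Ioo_exp_int_mul_I {n : ℤ} (hn : n ≠ 0) :
    ∫ θ in Ioo (-π) π, cexp (n * I * θ) = 0 := by
  have hc : (n : ℂ) * I ≠ 0 := mul_ne_zero (Int.cast_ne_zero.mpr hn) Complex.I_ne_zero
  have hperiodic : cexp (n * I * (π : ℝ)) = cexp (n * I * ((-π : ℝ) : ℂ)) :=
    exp_eq_exp_iff_exists_int.mpr ⟨n, by push_cast; ring⟩
  rw [← integral_Ioc_eq_integral_Ioo, ← intervalIntegral.integral_of_le (by linarith [pi_pos]),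
    integral_exp_mul_complex hc, hperiodic, sub_self, zero_div]

lemma polarCoord_symm_pow_mul_conj_pow (q : ℝ × ℝ) (a b : ℕ) :
    Complex.polarCoord.symm q ^ a * conj (Complex.polarCoord.symm q) ^ b
      = (q.1 ^ (a + b) : ℝ) * cexp (((a : ℤ) - b : ℤ) * I * q.2) := by
  have hpolar : Complex.polarCoord.symm q = q.1 * cexp (q.2 * I) := by
    rw [Complex.polarCoord_symm_apply, Complex.exp_mul_I, ← Complex.ofReal_cos,
      ← Complex.ofReal_sin]
  rw [hpolar, map_mul, Complex.conj_ofReal, ← Complex.exp_conj, map_mul, Complex.conj_ofReal,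
    Complex.conj_I, mul_pow, mul_pow, ← Complex.exp_nat_mul, ← Complex.exp_nat_mul,
    mul_mul_mul_comm, ← Complex.exp_add]
  push_cast
  ring_nf

lemma integral_Ioi_indicator_Iic_pow {s : ℝ} (hs : 0 ≤ s) (k : ℕ) :
    ∫ r in Ioi (0 : ℝ), (Iic s).indicator (fun r : ℝ => ((r ^ (k + 1) : ℝ) : ℂ)) r
      = ((s ^ (k + 2) / (k + 2) : ℝ) : ℂ) := by
  rw [setIntegral_indicator measurableSet_Iic, Ioi_inter_Iic,
    ← intervalIntegral.integral_of_le hs, intervalIntegral.integral_ofReal, integral_pow]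
  norm_num
  ring_nf

lemma integral_closedBall_pow_mul_conj_pow {s : ℝ} (hs : 0 ≤ s) (a b : ℕ) :
    ∫ w in Metric.closedBall (0 : ℂ) s, w ^ a * conj w ^ b
      = if a = b then ((π * s ^ (2 * a + 2) / (a + 1) : ℝ) : ℂ) else 0 := by
  have hpolar : ∀ q ∈ Ioi (0 : ℝ) ×ˢ Ioo (-π) π,
      q.1 • (Metric.closedBall (0 : ℂ) s).indicator (fun w => w ^ a * conj w ^ b)
          (Complex.polarCoord.symm q)
        = (Iic s).indicator (fun r : ℝ => ((r ^ (a + b + 1) : ℝ) : ℂ)) q.1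
            * cexp (((a : ℤ) - b : ℤ) * I * q.2) := by
    rintro ⟨r, θ⟩ ⟨hr, -⟩
    have hmem : Complex.polarCoord.symm (r, θ) ∈ Metric.closedBall (0 : ℂ) s ↔ r ∈ Iic s := by
      rw [mem_closedBall_zero_iff, Complex.norm_polarCoord_symm, abs_of_pos hr, mem_Iic]
    by_cases hrs : r ∈ Iic s
    · rw [indicator_of_mem (hmem.mpr hrs), indicator_of_mem hrs,
        polarCoord_symm_pow_mul_conj_pow, real_smul]
      push_cast
      ring
    · rw [indicator_of_notMem (mt hmem.mp hrs), indicator_of_notMem hrs, smul_zero, zero_mul]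
  rw [← integral_indicator measurableSet_closedBall, ← Complex.integral_comp_polarCoord_symm,
    polarCoord_target, setIntegral_congr_fun (measurableSet_Ioi.prod measurableSet_Ioo) hpolar,
    Measure.volume_eq_prod, setIntegral_prod_mul (fun r : ℝ => (Iic s).indicator
      (fun r : ℝ => ((r ^ (a + b + 1) : ℝ) : ℂ)) r) (fun θ : ℝ => cexp (((a : ℤ) - b : ℤ) * I * θ)),
    integral_Ioi_indicator_Iic_pow hs]
  split_ifs with hab
  · subst hab
    simp only [sub_self, Int.cast_zero, zero_mul, Complex.exp_zero, setIntegral_const,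
      Real.volume_real_Ioo, real_smul, max_eq_left (by linarith [pi_pos] : (0 : ℝ) ≤ π - -π)]
    push_cast
    have ha : (a : ℂ) + 1 ≠ 0 := by exact_mod_cast Nat.succ_ne_zero a
    rw [show (a : ℂ) + a + 2 = 2 * (a + 1) by ring, show a + a + 2 = 2 * a + 2 by ring]
    field_simp
    ring
  · rw [integral_Ioo_exp_int_mul_I (by omega), mul_zero]

end Disc

section Polydisc

def polydisc (ι : Type*) (r : ℝ) : Set (ι → ℂ) := {z | ∀ i, ‖z i‖ ≤ r}

variable {ι : Type*}

lemma polydisc_eq_pi (r : ℝ) :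
    polydisc ι r = univ.pi fun _ => Metric.closedBall (0 : ℂ) r := by
  ext z
  simp [polydisc]

lemma isCompact_polydisc (r : ℝ) : IsCompact (polydisc ι r) := by
  rw [polydisc_eq_pi]
  exact isCompact_univ_pi fun _ => isCompact_closedBall _ _

variable [Fintype ι]

lemma measurableSet_polydisc (r : ℝ) : MeasurableSet (polydisc ι r) := by
  rw [polydisc_eq_pi]
  exact MeasurableSet.univ_pi fun _ => measurableSet_closedBall

lemma integral_polydisc_prod (r : ℝ) (f : ι → ℂ → ℂ) :
    ∫ z in polydisc ι r, ∏ i, f i (z i) = ∏ i, ∫ w in Metric.closedBall (0 : ℂ) r, f i w := by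
  rw [polydisc_eq_pi, volume_pi, Measure.restrict_pi_pi, integral_fintype_prod_eq_prod]

noncomputable def polydiscMonomialNormSq (s : ℝ) (I : ι → ℕ) : ℝ :=
  ∏ i, π * s ^ (2 * I i + 2) / (I i + 1)

lemma integral_polydisc_monomial_mul_conj {s : ℝ} (hs : 0 ≤ s) (I J : ι → ℕ) :
    ∫ z in polydisc ι s, (∏ i, z i ^ J i) * conj (∏ i, z i ^ I i)
      = if J = I then (polydiscMonomialNormSq s I : ℂ) else 0 := by
  simp_rw [map_prod, map_pow, ← Finset.prod_mul_distrib]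
  rw [integral_polydisc_prod s fun i w => w ^ J i * conj w ^ I i]
  simp_rw [integral_closedBall_pow_mul_conj_pow hs]
  split_ifs with hJI
  · subst hJI
    simp [polydiscMonomialNormSq]
  · obtain ⟨i, hi⟩ := Function.ne_iff.mp hJI
    exact Finset.prod_eq_zero (Finset.mem_univ i) (if_neg hi)

lemma norm_prod_pow_le_of_mem_polydisc {r : ℝ} {z : ι → ℂ} (hz : z ∈ polydisc ι r)
    (J : ι → ℕ) : ‖∏ i, z i ^ J i‖ ≤ r ^ ∑ i, J i := by
  rw [norm_prod, ← Finset.prod_pow_eq_pow_sum]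
  exact Finset.prod_le_prod (fun i _ => norm_nonneg _)
    fun i _ => norm_pow (z i) (J i) ▸ pow_le_pow_left₀ (norm_nonneg _) (hz i) _

lemma summable_norm_coeff_mul_pow {s : ℝ} (hs : 0 ≤ s) {f : (ι → ℂ) → ℂ} {a : (ι → ℕ) → ℂ}
    (hf : ∀ z ∈ polydisc ι s, HasSum (fun J => a J * ∏ i, z i ^ J i) (f z)) :
    Summable fun J => ‖a J‖ * s ^ ∑ i, J i := by
  have hcorner : (fun _ => (s : ℂ)) ∈ polydisc ι s := fun _ => by
    rw [Complex.norm_real, norm_of_nonneg hs]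
  refine (hf _ hcorner).summable.norm.congr fun J => ?_
  rw [norm_mul, norm_prod, ← Finset.prod_pow_eq_pow_sum]
  simp_rw [norm_pow, Complex.norm_real, norm_of_nonneg hs]

lemma integral_polydisc_mul_conj_monomial {s : ℝ} (hs : 0 ≤ s) {f : (ι → ℂ) → ℂ}
    {a : (ι → ℕ) → ℂ} (hf : ∀ z ∈ polydisc ι s, HasSum (fun J => a J * ∏ i, z i ^ J i) (f z))
    (I : ι → ℕ) :
    ∫ z in polydisc ι s, f z * conj (∏ i, z i ^ I i) = a I * polydiscMonomialNormSq s I := by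
  have : IsFiniteMeasure (volume.restrict (polydisc ι s)) :=
    isFiniteMeasure_restrict.mpr (isCompact_polydisc s).measure_lt_top.ne
  have hmeas := measurableSet_polydisc (ι := ι) s
  have hsum := hasSum_integral_of_dominated_convergence
    (μ := volume.restrict (polydisc ι s))
    (F := fun J z => a J * (∏ i, z i ^ J i) * conj (∏ i, z i ^ I i))
    (f := fun z => f z * conj (∏ i, z i ^ I i))
    (fun J _ => ‖a J‖ * s ^ (∑ i, J i) * s ^ ∑ i, I i)
    (fun J => Continuous.aestronglyMeasurable (by fun_prop))
    (fun J => (ae_restrict_iff' hmeas).mpr <| ae_of_all _ fun z hz => by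
      rw [norm_mul, norm_mul, RCLike.norm_conj]
      gcongr
      exacts [norm_prod_pow_le_of_mem_polydisc hz J, norm_prod_pow_le_of_mem_polydisc hz I])
    (ae_of_all _ fun _ => (summable_norm_coeff_mul_pow hs hf).mul_right _)
    (integrable_const _)
    ((ae_restrict_iff' hmeas).mpr <| ae_of_all _ fun z hz => (hf z hz).mul_right _)
  have hterm : ∀ J, ∫ z in polydisc ι s, a J * (∏ i, z i ^ J i) * conj (∏ i, z i ^ I i)
      = if J = I then a I * polydiscMonomialNormSq s I else 0 := fun J => by
    simp only [mul_assoc, integral_const_mul, integral_polydisc_monomial_mul_conj hs]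
    split_ifs with h
    · rw [h]
    · rw [mul_zero]
  simp only [hterm] at hsum
  exact hsum.unique (hasSum_ite_eq I _)

lemma integral_polydisc_norm_monomial_sq {s : ℝ} (hs : 0 ≤ s) (I : ι → ℕ) :
    ∫ z in polydisc ι s, ‖∏ i, z i ^ I i‖ ^ 2 = polydiscMonomialNormSq s I := by
  have h := integral_polydisc_monomial_mul_conj hs I I
  have hcast := integral_ofReal (𝕜 := ℂ) (μ := volume.restrict (polydisc ι s))
    (f := fun z => ‖∏ i, z i ^ I i‖ ^ 2)
  simp only [Complex.mul_conj', if_true] at h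
  push_cast at hcast
  exact Complex.ofReal_injective (hcast.symm.trans h)

lemma polydiscMonomialNormSq_pos {s : ℝ} (hs : 0 < s) (I : ι → ℕ) :
    0 < polydiscMonomialNormSq s I :=
  Finset.prod_pos fun _ _ => by positivity

end Polydisc

lemma norm_integral_mul_conj_le {α : Type*} [MeasurableSpace α] {μ : Measure α} {f g : α → ℂ}
    (hf : MemLp f 2 μ) (hg : MemLp g 2 μ) :
    ‖∫ x, f x * conj (g x) ∂μ‖ ≤ √(∫ x, ‖f x‖ ^ 2 ∂μ) * √(∫ x, ‖g x‖ ^ 2 ∂μ) := by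
  have hholder := integral_mul_norm_le_Lp_mul_Lq Real.HolderConjugate.two_two
    (by rwa [ENNReal.ofReal_ofNat] : MemLp f (.ofReal 2) μ)
    (by rwa [ENNReal.ofReal_ofNat] : MemLp g (.ofReal 2) μ)
  simp only [Real.rpow_two, ← sqrt_eq_rpow] at hholder
  calc ‖∫ x, f x * conj (g x) ∂μ‖ ≤ ∫ x, ‖f x‖ * ‖g x‖ ∂μ := by
        simpa only [norm_mul, RCLike.norm_conj] using
          norm_integral_le_integral_norm (μ := μ) fun x => f x * conj (g x)
    _ ≤ _ := hholder

lemma ContinuousOn.memLp_two_restrict {X E : Type*} [TopologicalSpace X] [T2Space X]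
    [MeasurableSpace X] [OpensMeasurableSpace X] {μ : Measure X} [IsFiniteMeasureOnCompacts μ]
    [NormedAddCommGroup E] [SecondCountableTopologyEither X E] {f : X → E} {K : Set X}
    (hK : IsCompact K) (hf : ContinuousOn f K) :
    MemLp f 2 (μ.restrict K) :=
  (memLp_two_iff_integrable_sq_norm (hf.aestronglyMeasurable hK.measurableSet)).mpr
    ((hf.norm.pow 2).integrableOn_compact hK)

section Coefficients

variable {ι : Type*} [Fintype ι]

lemma norm_coeff_mul_sqrt_polydiscMonomialNormSq_le {s : ℝ} (hs : 0 < s) {f : (ι → ℂ) → ℂ}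
    {a : (ι → ℕ) → ℂ} (hfc : ContinuousOn f (polydisc ι s))
    (hf : ∀ z ∈ polydisc ι s, HasSum (fun J => a J * ∏ i, z i ^ J i) (f z)) (I : ι → ℕ) :
    ‖a I‖ * √(polydiscMonomialNormSq s I) ≤ √(∫ z in polydisc ι s, ‖f z‖ ^ 2) := by
  set w := polydiscMonomialNormSq s I
  have hw := polydiscMonomialNormSq_pos (ι := ι) hs I
  have hmonomial : Continuous fun z : ι → ℂ => ∏ i, z i ^ I i := by fun_prop
  have hCS : ‖a I‖ * √w * √w ≤ √(∫ z in polydisc ι s, ‖f z‖ ^ 2) * √w :=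
    calc ‖a I‖ * √w * √w = ‖∫ z in polydisc ι s, f z * conj (∏ i, z i ^ I i)‖ := by
          rw [mul_assoc, mul_self_sqrt hw.le, integral_polydisc_mul_conj_monomial hs.le hf,
            norm_mul, Complex.norm_real, norm_of_nonneg hw.le]
      _ ≤ √(∫ z in polydisc ι s, ‖f z‖ ^ 2) * √(∫ z in polydisc ι s, ‖∏ i, z i ^ I i‖ ^ 2) :=
          norm_integral_mul_conj_le (hfc.memLp_two_restrict (isCompact_polydisc s))
            (hmonomial.continuousOn.memLp_two_restrict (isCompact_polydisc s))
      _ = √(∫ z in polydisc ι s, ‖f z‖ ^ 2) * √w := by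
          rw [integral_polydisc_norm_monomial_sq hs.le]
  exact le_of_mul_le_mul_right hCS (sqrt_pos.mpr hw)

lemma two_mul_pi_mul_pow_le {R : ℝ} (hR : 0 ≤ R) (n : ℕ) :
    2 * π * R ^ (2 * n + 2) ≤ π * (√2 * R) ^ (2 * n + 2) / (n + 1) := by
  have hsqrt : (√2 * R) ^ (2 * n + 2) = 2 * 2 ^ n * R ^ (2 * n + 2) := by
    rw [mul_pow, pow_add, pow_mul, sq_sqrt zero_le_two]
    ring
  have hn : (n : ℝ) + 1 ≤ 2 ^ n := by exact_mod_cast Nat.lt_two_pow_self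
  rw [hsqrt, le_div_iff₀ (by positivity)]
  have : 0 ≤ 2 * π * R ^ (2 * n + 2) := by positivity
  nlinarith

lemma sqrt_two_pi_pow_mul_pow_le_sqrt_polydiscMonomialNormSq {R : ℝ} (hR : 0 ≤ R)
    (I : ι → ℕ) :
    √(2 * π) ^ Fintype.card ι * R ^ (Fintype.card ι + ∑ i, I i)
      ≤ √(polydiscMonomialNormSq (√2 * R) I) := by
  rw [polydiscMonomialNormSq, le_sqrt (by positivity) (Finset.prod_nonneg fun _ _ => by positivity)]
  have hprod : (√(2 * π) ^ Fintype.card ι * R ^ (Fintype.card ι + ∑ i, I i)) ^ 2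
      = ∏ i, 2 * π * R ^ (2 * I i + 2) := by
    rw [Finset.prod_mul_distrib, Finset.prod_const, Finset.prod_pow_eq_pow_sum,
      Finset.sum_add_distrib, ← Finset.mul_sum, Finset.sum_const, Finset.card_univ, mul_pow,
      ← pow_mul, ← pow_mul, mul_comm _ 2, pow_mul, sq_sqrt (by positivity), smul_eq_mul]
    ring_nf
  rw [hprod]
  exact Finset.prod_le_prod (fun _ _ => by positivity) fun i _ => two_mul_pi_mul_pow_le hR (I i)

lemma norm_coeff_mul_le_sqrt_integral_polydisc {R : ℝ} (hR : 0 < R) {F : (ι → ℂ) → ℂ}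
    {a : (ι → ℕ) → ℂ} (hFc : ContinuousOn F (polydisc ι (2 * R)))
    (hF : ∀ z : ι → ℂ, (∀ i, ‖z i‖ < 2 * R) → HasSum (fun J => a J * ∏ i, z i ^ J i) (F z))
    (I : ι → ℕ) :
    ‖a I‖ * (√(2 * π) ^ Fintype.card ι * R ^ (Fintype.card ι + ∑ i, I i))
      ≤ √(∫ z in polydisc ι (2 * R), ‖F z‖ ^ 2) := by
  have hs : √2 * R < 2 * R := by
    gcongr
    rw [sqrt_lt' two_pos]
    norm_num
  have hsub : polydisc ι (√2 * R) ⊆ polydisc ι (2 * R) := fun z hz i => (hz i).trans hs.le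
  calc _ ≤ ‖a I‖ * √(polydiscMonomialNormSq (√2 * R) I) := by
        gcongr
        exact sqrt_two_pi_pow_mul_pow_le_sqrt_polydiscMonomialNormSq hR.le I
    _ ≤ √(∫ z in polydisc ι (√2 * R), ‖F z‖ ^ 2) :=
        norm_coeff_mul_sqrt_polydiscMonomialNormSq_le (by positivity) (hFc.mono hsub)
          (fun z hz => hF z fun i => (hz i).trans_lt hs) I
    _ ≤ √(∫ z in polydisc ι (2 * R), ‖F z‖ ^ 2) :=
        sqrt_le_sqrt <| setIntegral_mono_set
          ((hFc.norm.pow 2).integrableOn_compact (μ := volume) (isCompact_polydisc _))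
          (ae_of_all _ fun _ => sq_nonneg _) hsub.eventuallyLE

end Coefficients

section Combinatorics

open Finset

lemma card_piAntidiag_univ_le (ι : Type*) [Fintype ι] [DecidableEq ι] (k : ℕ) :
    #(piAntidiag (univ : Finset ι) k) ≤ Fintype.card ι ^ k := by
  have hmultinomial := sum_pow_eq_sum_piAntidiag (univ : Finset ι) (fun _ => (1 : ℕ)) k
  simp only [sum_const, card_univ, smul_eq_mul, mul_one, one_pow, prod_const_one] at hmultinomial
  rw [hmultinomial, card_eq_sum_ones]
  exact sum_le_sum fun f _ => Nat.multinomial_pos _ _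

lemma sum_pow_le_two_mul_pow {ε : ℝ} (hε : 0 ≤ ε) (hε' : ε ≤ 1 / 2) {m : ℕ} {D : Finset ℕ}
    (hD : ∀ k ∈ D, m ≤ k) : ∑ k ∈ D, ε ^ k ≤ 2 * ε ^ m := by
  have hsub : D ⊆ Ico m (D.sup id + 1) := fun k hk =>
    mem_Ico.mpr ⟨hD k hk, Nat.lt_succ_of_le (le_sup (f := id) hk)⟩
  calc ∑ k ∈ D, ε ^ k ≤ ∑ k ∈ Ico m (D.sup id + 1), ε ^ k :=
        sum_le_sum_of_subset_of_nonneg hsub fun _ _ _ => by positivity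
    _ ≤ ε ^ m / (1 - ε) := geom_sum_Ico_le_of_lt_one hε (by linarith)
    _ ≤ 2 * ε ^ m := by
        rw [div_le_iff₀ (by linarith)]
        nlinarith [pow_nonneg hε m]

lemma sum_div_card_pow_degree_le {ι : Type*} [Fintype ι] {ε : ℝ} (hε : 0 ≤ ε)
    (hε' : ε ≤ 1 / 2) {m : ℕ} {T : Finset (ι → ℕ)} (hT : ∀ I ∈ T, m ≤ ∑ i, I i) :
    ∑ I ∈ T, (ε / Fintype.card ι) ^ ∑ i, I i ≤ 2 * ε ^ m := by
  classical
  set p : ℝ := (Fintype.card ι : ℝ)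
  have hpε : p * (ε / p) ≤ ε := by
    rcases eq_or_ne p 0 with hp | hp
    · simpa [hp] using hε
    · rw [mul_div_cancel₀ _ hp]
  have hfiber : ∀ k, #{I ∈ T | ∑ i, I i = k} • (ε / p) ^ k ≤ ε ^ k := fun k => by
    have hcard : #{I ∈ T | ∑ i, I i = k} ≤ Fintype.card ι ^ k :=
      (Finset.card_le_card fun I hI => mem_piAntidiag.mpr
        ⟨(mem_filter.mp hI).2, fun i _ => mem_univ i⟩).trans
        (card_piAntidiag_univ_le ι k)
    calc #{I ∈ T | ∑ i, I i = k} • (ε / p) ^ k ≤ (Fintype.card ι ^ k) • (ε / p) ^ k :=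
          nsmul_le_nsmul_left (by positivity) hcard
      _ = (p * (ε / p)) ^ k := by rw [nsmul_eq_mul, mul_pow]; push_cast; rfl
      _ ≤ ε ^ k := pow_le_pow_left₀ (by positivity) hpε k
  rw [sum_comp (s := T) (fun k => (ε / p) ^ k) fun I : ι → ℕ => ∑ i, I i]
  refine (sum_le_sum fun k _ => hfiber k).trans (sum_pow_le_two_mul_pow hε hε' ?_)
  simp only [Finset.mem_image]
  rintro k ⟨I, hI, rfl⟩
  exact hT I hI

end Combinatorics

lemma norm_sub_coeff_zero_le {ι : Type*} [Fintype ι] {a : (ι → ℕ) → ℂ} {z : ι → ℂ} {w : ℂ}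
    {m : ℕ} {ε ρ Q : ℝ} (hε : 0 ≤ ε) (hε' : ε ≤ 1 / 2)
    (hsum : HasSum (fun I => a I * ∏ i, z i ^ I i) w)
    (hvanish : ∀ I : ι → ℕ, 1 ≤ ∑ i, I i → ∑ i, I i < m → a I = 0)
    (hcoef : ∀ I, ‖a I‖ * ρ ^ ∑ i, I i ≤ Q) (hz : z ∈ polydisc ι (ε * ρ / Fintype.card ι)) :
    ‖w - a (fun _ => 0)‖ ≤ 2 * ε ^ m * Q := by
  classical
  have hQ : 0 ≤ Q := by
    have h0 := hcoef fun _ => 0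
    simp only [Finset.sum_const_zero, pow_zero, mul_one] at h0
    exact (norm_nonneg _).trans h0
  have hterm : ∀ I, ‖a I * ∏ i, z i ^ I i‖ ≤ Q * (ε / Fintype.card ι) ^ ∑ i, I i := fun I =>
    calc ‖a I * ∏ i, z i ^ I i‖ ≤ ‖a I‖ * (ε * ρ / Fintype.card ι) ^ ∑ i, I i := by
          rw [norm_mul]
          gcongr
          exact norm_prod_pow_le_of_mem_polydisc hz I
      _ = ‖a I‖ * ρ ^ (∑ i, I i) * (ε / Fintype.card ι) ^ ∑ i, I i := by
          rw [mul_div_right_comm, mul_pow]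
          ring
      _ ≤ Q * (ε / Fintype.card ι) ^ ∑ i, I i := by gcongr; exact hcoef I
  set bound : (ι → ℕ) → ℝ := fun I =>
    if m ≤ ∑ i, I i then Q * (ε / Fintype.card ι) ^ ∑ i, I i else 0
  have hle_bound : ∀ I, ‖if I = (fun _ => 0) then 0 else a I * ∏ i, z i ^ I i‖ ≤ bound I := by
    intro I
    by_cases hm : m ≤ ∑ i, I i
    · simp only [bound, if_pos hm]
      split_ifs
      · rw [norm_zero]; positivity
      · exact hterm I
    · simp only [bound, if_neg hm, norm_le_zero_iff, ite_eq_left_iff]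
      intro hI
      obtain ⟨i, hi⟩ := Function.ne_iff.mp hI
      have hdeg : 1 ≤ ∑ i, I i :=
        (Nat.one_le_iff_ne_zero.mpr hi).trans (Finset.single_le_sum (by simp) (Finset.mem_univ i))
      rw [hvanish I hdeg (not_le.mp hm), zero_mul]
  have htail := hasSum_ite_sub_hasSum hsum (fun _ => 0)
  simp only [pow_zero, Finset.prod_const_one, mul_one] at htail
  refine le_of_tendsto' htail.norm fun T => (norm_sum_le_of_le T fun I _ => hle_bound I).trans ?_
  rw [← Finset.sum_filter, ← Finset.mul_sum, mul_comm]
  gcongr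
  exact sum_div_card_pow_degree_le hε hε' fun I hI => (Finset.mem_filter.mp hI).2

lemma rpow_neg_natCast_div_two {x : ℝ} (hx : 0 ≤ x) (n : ℕ) :
    x ^ (-(n : ℝ) / 2) = (√x ^ n)⁻¹ := by
  rw [neg_div, rpow_neg hx, sqrt_eq_rpow, ← rpow_natCast, ← rpow_mul hx, one_div_mul_eq_div]

lemma norm_le_sqrt_sum_norm_sq {ι : Type*} [Fintype ι] (z : ι → ℂ) (i : ι) :
    ‖z i‖ ≤ √(∑ j, ‖z j‖ ^ 2) :=
  (le_sqrt (norm_nonneg _) (by positivity)).mpr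
    (Finset.single_le_sum (fun j _ => sq_nonneg ‖z j‖) (Finset.mem_univ i))

theorem jet_tangency_sup_bound_general
    {p m : ℕ} (R ε : ℝ) (hR : 0 < R)
    (hε : 0 < ε) (hε' : ε < 1 / 2)
    (U : Set (Fin p → ℂ))
    (hpoly : {z : Fin p → ℂ | ∀ i, ‖z i‖ ≤ 2 * R} ⊆ U)
    (F : (Fin p → ℂ) → ℂ) (a : (Fin p → ℕ) → ℂ) (c : ℂ)
    (hF : DifferentiableOn ℂ F U)
    (ha : ∀ z : Fin p → ℂ, (∀ i, ‖z i‖ < 2 * R) →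
      HasSum (fun I : Fin p → ℕ => a I * ∏ i, z i ^ I i) (F z))
    (hc : a (fun _ => 0) = c)
    (hvanish : ∀ I : Fin p → ℕ, 1 ≤ ∑ i, I i → ∑ i, I i < m → a I = 0) :
    ∀ z : Fin p → ℂ, Real.sqrt (∑ i, ‖z i‖ ^ 2) ≤ ε * R / p →
      ‖F z - c‖ ≤ 2 * (2 * π) ^ (-(p : ℝ) / 2) * R ^ (-(p : ℤ)) * ε ^ m *
        Real.sqrt (∫ w in {w : Fin p → ℂ | ∀ i, ‖w i‖ ≤ 2 * R}, ‖F w‖ ^ 2) := by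
  intro z hz
  set L := √(∫ w in polydisc (Fin p) (2 * R), ‖F w‖ ^ 2)
  have hcoef : ∀ I, ‖a I‖ * R ^ ∑ i, I i ≤ L / (√(2 * π) ^ p * R ^ p) := fun I => by
    have hI := norm_coeff_mul_le_sqrt_integral_polydisc hR (hF.continuousOn.mono hpoly) ha I
    rw [Fintype.card_fin] at hI
    rw [le_div_iff₀ (by positivity)]
    linear_combination hI
  have hz' : z ∈ polydisc (Fin p) (ε * R / Fintype.card (Fin p)) := fun i => by
    rw [Fintype.card_fin]
    exact (norm_le_sqrt_sum_norm_sq z i).trans hz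
  have hzR : ∀ i, ‖z i‖ < 2 * R := fun i =>
    (hz' i).trans_lt <| by
      rw [Fintype.card_fin]
      calc ε * R / p ≤ ε * R := div_le_self (by positivity) (Nat.one_le_cast.mpr i.pos)
        _ < 2 * R := by nlinarith
  change ‖F z - c‖ ≤ 2 * (2 * π) ^ (-(p : ℝ) / 2) * R ^ (-(p : ℤ)) * ε ^ m * L
  calc ‖F z - c‖ ≤ 2 * ε ^ m * (L / (√(2 * π) ^ p * R ^ p)) :=
        hc ▸ norm_sub_coeff_zero_le hε.le hε'.le (ha z hzR) hvanish hcoef hz'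
    _ = _ := by
        rw [rpow_neg_natCast_div_two (by positivity), zpow_neg, zpow_natCast]
        ring

/-- If `F` is holomorphic on a domain containing the closed polydisc `{|zᵢ| ≤ 2R} ⊆ ℂᵖ`
and all nonconstant Taylor terms of total degree `< m` vanish, then for `0 < ε < 1/2` and
`|z| ≤ εR/p` (Euclidean norm), `|F(z) − c| ≤ 2 (2π)^{-p/2} R^{-p} ε^m (∫_{|zᵢ|≤2R} |F|²)^{1/2}`. -/
theorem jet_tangency_sup_bound
    {p m : ℕ} (hp : 1 ≤ p) (hm : 1 ≤ m) (R ε : ℝ) (hR : 0 < R)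
    (hε : 0 < ε) (hε' : ε < 1 / 2)
    (U : Set (Fin p → ℂ)) (hU : IsOpen U)
    (hpoly : {z : Fin p → ℂ | ∀ i, ‖z i‖ ≤ 2 * R} ⊆ U)
    (F : (Fin p → ℂ) → ℂ) (a : (Fin p → ℕ) → ℂ) (c : ℂ)
    (hF : DifferentiableOn ℂ F U)
    (ha : ∀ z : Fin p → ℂ, (∀ i, ‖z i‖ < 2 * R) →
      HasSum (fun I : Fin p → ℕ => a I * ∏ i, z i ^ I i) (F z))
    (hc : a (fun _ => 0) = c)
    (hvanish : ∀ I : Fin p → ℕ, 1 ≤ ∑ i, I i → ∑ i, I i < m → a I = 0) :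
    ∀ z : Fin p → ℂ, Real.sqrt (∑ i, ‖z i‖ ^ 2) ≤ ε * R / p →
      ‖F z - c‖ ≤ 2 * (2 * π) ^ (-(p : ℝ) / 2) * R ^ (-(p : ℤ)) * ε ^ m *
        Real.sqrt (∫ w in {w : Fin p → ℂ | ∀ i, ‖w i‖ ≤ 2 * R}, ‖F w‖ ^ 2) :=
  jet_tangency_sup_bound_general R ε hR hε hε' U hpoly F a c hF ha hc hvanish
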